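/- Let G be a non-abelian finite group, A an algebra, and L a subspace of A. Define L̃ = {f : G → A : f(x) ∈ L for all x ∈ G} in the convolution algebra of A-valued functions on G. Then the following are equivalent: (i) L̃ is a Lie ideal of the convolution algebra; (ii) L is a two-sided ideal of A; (iii) L̃ is a two-sided ideal of the convolution algebra. -/
import Mathlib


open scoped BigOperators

/-- The convolution product `(f*g)(x) = ∑_s f(xs) g(s⁻¹)` on `A`-valued functions on a
finite group `G`. -/
def fconv {G : Type*} [Group G] [Fintype G] {A : Type*} [Ring A]
    (f g : G → A) : G → A :=
  fun x => ∑ s : G, f (x * s) * g s⁻¹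

lemma fconv_delta {G : Type*} [Group G] [Fintype G] [DecidableEq G] {A : Type*} [Ring A]
    (g k : G) (l a : A) :
    fconv (fun x => if x = g then l else 0) (fun x => if x = k then a else 0)
      = fun x => if x = g * k then l * a else 0 := by
  funext x
  unfold fconv
  have h : ∀ s : G, (if x * s = g then l else 0) * (if s⁻¹ = k then a else 0)
      = if s = k⁻¹ then (if x = g * k then l * a else 0) else 0 := by
    intro s
    by_cases hs : s = k⁻¹
    · subst hs
      simp [mul_inv_eq_iff_eq_mul, ite_mul]
    · have : s⁻¹ ≠ k := fun hk => hs (by rw [← hk, inv_inv])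
      simp [hs, this]
  rw [Finset.sum_congr rfl fun s _ => h s, Finset.sum_ite_eq' Finset.univ k⁻¹]
  simp

/-- For a non-abelian finite group `G`, an algebra `A` and a subspace
`L ⊆ A` with `L̃ = {f : G → A | ∀ x, f x ∈ L}`, the following are equivalent:
(i) `L̃` is a Lie ideal of the convolution algebra; (ii) `L` is a two-sided ideal of `A`;
(iii) `L̃` is a two-sided ideal of the convolution algebra. -/
theorem tilde_lie_ideal_iff_ideal_nonabelian
    (G : Type*) [Group G] [Fintype G]
    (hG : ¬ ∀ x y : G, x * y = y * x)
    (A : Type*) [Ring A] [Algebra ℂ A]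
    (L : Submodule ℂ A) (Lt : Submodule ℂ (G → A))
    (hLt : (Lt : Set (G → A)) = {f : G → A | ∀ x, f x ∈ L}) :
    ((∀ f ∈ Lt, ∀ h : G → A, fconv f h - fconv h f ∈ Lt) ↔
        (∀ l ∈ L, ∀ a : A, a * l ∈ L ∧ l * a ∈ L)) ∧
      ((∀ l ∈ L, ∀ a : A, a * l ∈ L ∧ l * a ∈ L) ↔
        (∀ f ∈ Lt, ∀ h : G → A, fconv h f ∈ Lt ∧ fconv f h ∈ Lt)) := by
  letI : DecidableEq G := Classical.decEq G
  have memLt : ∀ f : G → A, f ∈ Lt ↔ ∀ x, f x ∈ L := fun f => Set.ext_iff.mp hLt f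
  have deltaMem : ∀ (g : G) (l : A), l ∈ L → (fun x => if x = g then l else 0) ∈ Lt := by
    intro g l hl
    rw [memLt]
    intro x
    by_cases hx : x = g <;> simp [hx, hl, L.zero_mem]
  -- (ii) → (iii)
  have ideal_imp : (∀ l ∈ L, ∀ a : A, a * l ∈ L ∧ l * a ∈ L) →
      ∀ f ∈ Lt, ∀ h : G → A, fconv h f ∈ Lt ∧ fconv f h ∈ Lt := by
    intro hI f hf h
    rw [memLt] at hf
    constructor
    · rw [memLt]; intro x
      exact L.sum_mem fun s _ => (hI _ (hf s⁻¹) (h (x * s))).1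
    · rw [memLt]; intro x
      exact L.sum_mem fun s _ => (hI _ (hf (x * s)) (h s⁻¹)).2
  constructor
  · constructor
    · -- (i) → (ii)
      intro hLie l hl a
      push_neg at hG
      obtain ⟨g, k, hgk⟩ := hG
      have hf := deltaMem g l hl
      have hmem := hLie _ hf (fun x => if x = k then a else 0)
      rw [fconv_delta, fconv_delta, memLt] at hmem
      constructor
      · have hne : k * g ≠ g * k := fun h => hgk h.symm
        have := hmem (k * g)
        rw [Pi.sub_apply, if_neg hne, if_pos rfl, zero_sub] at this
        exact L.neg_mem_iff.mp this
      · have := hmem (g * k)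
        rw [Pi.sub_apply, if_pos rfl, if_neg hgk, sub_zero] at this
        exact this
    · -- (ii) → (i)
      intro hI f hf h
      exact Lt.sub_mem (ideal_imp hI f hf h).2 (ideal_imp hI f hf h).1
  · constructor
    · exact ideal_imp
    · -- (iii) → (ii)
      intro hId l hl a
      have hf := deltaMem (1 : G) l hl
      have hmem := hId _ hf (fun x => if x = (1 : G) then a else 0)
      obtain ⟨h1, h2⟩ := hmem
      rw [show (fconv (fun x => if x = (1:G) then a else 0) (fun x => if x = (1:G) then l else 0))
            = fun x => if x = (1:G) * 1 then a * l else 0 from fconv_delta 1 1 a l, memLt] at h1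
      rw [fconv_delta, memLt] at h2
      constructor
      · have := h1 1; simpa using this
      · have := h2 1; simpa using this
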